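/- Let c_{n,r} = √(2 · min(r, n − r)). For all W, V ∈ 𝕍_{n,r} there exists an orthogonal matrix Q ∈ O(r) such that ‖W − V Q‖_F ≤ c_{n,r} · ‖W Wᵀ (I − V Vᵀ)‖₂. -/

import Mathlib

open Matrix

/-- The Frobenius norm of a real matrix: the square root of the sum of squared entries. -/
noncomputable def frobNorm {m r : ℕ} (M : Matrix (Fin m) (Fin r) ℝ) : ℝ :=
  Real.sqrt (∑ i, ∑ j, (M i j) ^ 2)

/-- The spectral norm (largest singular value) of a real matrix, as the operator norm of
the induced linear map between Euclidean spaces. -/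
noncomputable def specNorm {m r : ℕ} (M : Matrix (Fin m) (Fin r) ℝ) : ℝ :=
  ‖LinearMap.toContinuousLinearMap (Matrix.toEuclideanLin M)‖

/-! ### Auxiliary lemmas -/

section Aux

open Polynomial Filter

lemma dot_self_nonneg' {k : ℕ} (x : Fin k → ℝ) : 0 ≤ x ⬝ᵥ x :=
  Finset.sum_nonneg fun _ _ => mul_self_nonneg _

lemma dot_CS {k : ℕ} (x y : Fin k → ℝ) : (x ⬝ᵥ y)^2 ≤ (x ⬝ᵥ x) * (y ⬝ᵥ y) := by
  simpa [dotProduct, pow_two] using Finset.sum_mul_sq_le_sq_mul_sq Finset.univ x y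

lemma dot_mulVec_self {k m : ℕ} (B : Matrix (Fin m) (Fin k) ℝ) (v : Fin k → ℝ) :
    (B *ᵥ v) ⬝ᵥ (B *ᵥ v) = v ⬝ᵥ ((Bᵀ * B) *ᵥ v) := by
  rw [← mulVec_mulVec, dotProduct_mulVec v, vecMul_transpose]

lemma posSemidef_of_quad {k : ℕ} {X : Matrix (Fin k) (Fin k) ℝ} (h1 : Xᵀ = X)
    (h2 : ∀ v, 0 ≤ v ⬝ᵥ (X *ᵥ v)) : X.PosSemidef := by
  apply Matrix.PosSemidef.of_dotProduct_mulVec_nonneg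
  · rw [Matrix.IsHermitian, conjTranspose_eq_transpose_of_trivial, h1]
  · intro x; simpa using h2 x

lemma psd_dot {k : ℕ} {X : Matrix (Fin k) (Fin k) ℝ} (h : X.PosSemidef) (v : Fin k → ℝ) :
    0 ≤ v ⬝ᵥ (X *ᵥ v) := by simpa using h.dotProduct_mulVec_nonneg v

lemma psd_trace_nonneg {k : ℕ} {X : Matrix (Fin k) (Fin k) ℝ} (h : X.PosSemidef) :
    0 ≤ X.trace := by
  apply Finset.sum_nonneg
  intro i _
  have := h.dotProduct_mulVec_nonneg (Pi.single i 1)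
  simpa [dotProduct, mulVec, Pi.single_apply] using this

lemma psd_transpose_eq {k : ℕ} {X : Matrix (Fin k) (Fin k) ℝ} (h : X.PosSemidef) : Xᵀ = X := by
  have := h.isHermitian
  rwa [Matrix.IsHermitian, conjTranspose_eq_transpose_of_trivial] at this

lemma specNorm_nonneg {m r : ℕ} (M : Matrix (Fin m) (Fin r) ℝ) : 0 ≤ specNorm M :=
  norm_nonneg _

lemma dot_self_eq_norm_sq {k : ℕ} (x : Fin k → ℝ) :
    x ⬝ᵥ x = ‖(WithLp.equiv 2 (Fin k → ℝ)).symm x‖ ^ 2 := by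
  rw [EuclideanSpace.norm_eq, Real.sq_sqrt (by positivity)]
  simp [dotProduct, pow_two]

lemma mulVec_dot_le {m k : ℕ} (A : Matrix (Fin m) (Fin k) ℝ) (x : Fin k → ℝ) :
    (A *ᵥ x) ⬝ᵥ (A *ᵥ x) ≤ specNorm A ^ 2 * (x ⬝ᵥ x) := by
  have h := (LinearMap.toContinuousLinearMap (Matrix.toEuclideanLin A)).le_opNorm
    ((WithLp.equiv 2 (Fin k → ℝ)).symm x)
  have happ : (LinearMap.toContinuousLinearMap (Matrix.toEuclideanLin A))
      ((WithLp.equiv 2 (Fin k → ℝ)).symm x) = (WithLp.equiv 2 (Fin m → ℝ)).symm (A *ᵥ x) := by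
    simp [Matrix.toEuclideanLin_apply]
  rw [happ] at h
  rw [dot_self_eq_norm_sq, dot_self_eq_norm_sq]
  calc ‖(WithLp.equiv 2 (Fin m → ℝ)).symm (A *ᵥ x)‖ ^ 2
      ≤ (specNorm A * ‖(WithLp.equiv 2 (Fin k → ℝ)).symm x‖)^2 := by
        apply pow_le_pow_left₀ (norm_nonneg _) h
    _ = specNorm A ^ 2 * ‖(WithLp.equiv 2 (Fin k → ℝ)).symm x‖ ^ 2 := by ring

lemma specNorm_transpose {m k : ℕ} (A : Matrix (Fin m) (Fin k) ℝ) :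
    specNorm Aᵀ = specNorm A := by
  unfold specNorm
  have h1 : Aᵀ = Aᴴ := (conjTranspose_eq_transpose_of_trivial A).symm
  rw [h1, Matrix.toEuclideanLin_conjTranspose_eq_adjoint,
    LinearMap.adjoint_toContinuousLinearMap]
  exact (ContinuousLinearMap.adjoint : _ ≃ₗᵢ⋆[ℝ] _).norm_map _

lemma proj_psd {n r : ℕ} (V : Matrix (Fin n) (Fin r) ℝ) (hV : Vᵀ * V = 1) :
    ((1 : Matrix (Fin n) (Fin n) ℝ) - V * Vᵀ).PosSemidef := by
  have hVV : V * Vᵀ * (V * Vᵀ) = V * Vᵀ := by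
    rw [Matrix.mul_assoc, ← Matrix.mul_assoc Vᵀ V Vᵀ, hV, Matrix.one_mul]
  have hsymm : (V * Vᵀ)ᵀ = V * Vᵀ := by
    rw [transpose_mul, transpose_transpose]
  apply posSemidef_of_quad
  · rw [transpose_sub, transpose_one, hsymm]
  · intro v
    have hd : (Vᵀ *ᵥ v) ⬝ᵥ (Vᵀ *ᵥ v) = v ⬝ᵥ ((V * Vᵀ) *ᵥ v) := by
      rw [dot_mulVec_self Vᵀ v, transpose_transpose]
    have hd2 : ((V * Vᵀ) *ᵥ v) ⬝ᵥ ((V * Vᵀ) *ᵥ v) = v ⬝ᵥ ((V * Vᵀ) *ᵥ v) := by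
      rw [dot_mulVec_self (V * Vᵀ) v, hsymm, hVV]
    have hcs := dot_CS v ((V * Vᵀ) *ᵥ v)
    have h0 : 0 ≤ v ⬝ᵥ ((V * Vᵀ) *ᵥ v) := by rw [← hd]; exact dot_self_nonneg' _
    have hvv : 0 ≤ v ⬝ᵥ v := dot_self_nonneg' v
    have hle : v ⬝ᵥ ((V * Vᵀ) *ᵥ v) ≤ v ⬝ᵥ v := by nlinarith
    simp only [sub_mulVec, one_mulVec, dotProduct_sub]
    linarith

lemma eval_charpoly_det {r : ℕ} (M : Matrix (Fin r) (Fin r) ℝ) (t : ℝ) :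
    ((-M).charpoly).eval t = (M + t • (1 : Matrix (Fin r) (Fin r) ℝ)).det := by
  rw [Matrix.charpoly, show (-M).charmatrix.det.eval t = (evalRingHom t) (-M).charmatrix.det
      from rfl, RingHom.map_det]
  congr 1
  ext i j
  by_cases h : i = j <;>
    simp [charmatrix_apply, diagonal_apply, Matrix.one_apply, Matrix.add_apply, h,
      RingHom.mapMatrix_apply, Matrix.map_apply, add_comm]

lemma orth_compact (r : ℕ) :
    IsCompact {Q : Matrix (Fin r) (Fin r) ℝ | Qᵀ * Q = 1} := by
  have hclosed : IsClosed {Q : Matrix (Fin r) (Fin r) ℝ | Qᵀ * Q = 1} := by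
    have hcont : Continuous fun Q : Matrix (Fin r) (Fin r) ℝ => Qᵀ * Q :=
      (continuous_id.matrix_transpose).matrix_mul continuous_id
    exact isClosed_singleton.preimage hcont
  have hsub : {Q : Matrix (Fin r) (Fin r) ℝ | Qᵀ * Q = 1} ⊆
      Set.univ.pi (fun _ : Fin r => Set.univ.pi fun _ : Fin r => Set.Icc (-1:ℝ) 1) := by
    intro Q hQ i _ j _
    have h1 : (Qᵀ * Q) j j = 1 := by rw [hQ]; simp [Matrix.one_apply]
    have h2 : ∑ k, Q k j * Q k j = 1 := by
      simpa [Matrix.mul_apply, transpose_apply] using h1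
    have h3 : Q i j * Q i j ≤ 1 := by
      rw [← h2]
      exact Finset.single_le_sum (f := fun k => Q k j * Q k j)
        (fun k _ => mul_self_nonneg _) (Finset.mem_univ i)
    constructor <;> nlinarith
  exact IsCompact.of_isClosed_subset
    (isCompact_univ_pi fun _ => isCompact_univ_pi fun _ => isCompact_Icc) hclosed hsub

lemma orth_trace_abs_le (r : ℕ) (Q : Matrix (Fin r) (Fin r) ℝ) (hQ : Qᵀ * Q = 1) :
    |Q.trace| ≤ (r : ℝ) := by
  have h : ∀ i : Fin r, |Q i i| ≤ 1 := by
    intro i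
    have h1 : (Qᵀ * Q) i i = 1 := by rw [hQ]; simp [Matrix.one_apply]
    have h2 : ∑ k, Q k i * Q k i = 1 := by
      simpa [Matrix.mul_apply, transpose_apply] using h1
    have h3 : Q i i * Q i i ≤ 1 := by
      rw [← h2]
      exact Finset.single_le_sum (f := fun k => Q k i * Q k i)
        (fun k _ => mul_self_nonneg _) (Finset.mem_univ i)
    rw [abs_le]; constructor <;> nlinarith
  calc |Q.trace| ≤ ∑ i, |Q i i| := Finset.abs_sum_le_sum_abs _ _
    _ ≤ ∑ _i : Fin r, (1:ℝ) := Finset.sum_le_sum fun i _ => h i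
    _ = r := by simp

open scoped MatrixOrder in
/-- Polar factor for invertible `A` with operator-norm-type bound `c`. -/
lemma polar_invertible {r : ℕ} (A : Matrix (Fin r) (Fin r) ℝ) (hdet : A.det ≠ 0)
    (c : ℝ) (hc : 0 ≤ c) (hA : ∀ v, (A *ᵥ v) ⬝ᵥ (A *ᵥ v) ≤ c^2 * (v ⬝ᵥ v)) :
    ∃ Q : Matrix (Fin r) (Fin r) ℝ, Qᵀ * Q = 1 ∧ (Aᵀ * A).trace ≤ c * (Qᵀ * A).trace := by
  have hAA : (Aᵀ * A).PosSemidef := by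
    have := Matrix.posSemidef_conjTranspose_mul_self A
    rwa [conjTranspose_eq_transpose_of_trivial] at this
  set P := CFC.sqrt (Aᵀ * A) with hPdef
  have hP : P.PosSemidef := Matrix.nonneg_iff_posSemidef.mp (CFC.sqrt_nonneg _)
  have hPP : P * P = Aᵀ * A := CFC.sqrt_mul_sqrt_self _ hAA.nonneg
  have hPsymm : Pᵀ = P := psd_transpose_eq hP
  have hPdet : IsUnit P.det := by
    have h2 : P.det * P.det = A.det * A.det := by
      rw [← det_mul, hPP, det_mul, det_transpose]
    refine isUnit_iff_ne_zero.2 fun h0 => hdet ?_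
    rw [h0, zero_mul] at h2
    exact mul_self_eq_zero.1 h2.symm
  have hPquad : ∀ v, v ⬝ᵥ (P *ᵥ v) ≤ c * (v ⬝ᵥ v) := by
    intro v
    have h1 : (v ⬝ᵥ (P *ᵥ v))^2 ≤ (v ⬝ᵥ v) * ((P *ᵥ v) ⬝ᵥ (P *ᵥ v)) := dot_CS v (P *ᵥ v)
    have h2 : (P *ᵥ v) ⬝ᵥ (P *ᵥ v) = (A *ᵥ v) ⬝ᵥ (A *ᵥ v) := by
      rw [dot_mulVec_self P v, hPsymm, hPP, ← dot_mulVec_self A v]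
    have h3 := hA v
    have h4 : 0 ≤ v ⬝ᵥ v := dot_self_nonneg' v
    have h5 : 0 ≤ v ⬝ᵥ (P *ᵥ v) := psd_dot hP v
    nlinarith [h1, h2, h3, h4, h5, mul_nonneg hc h4]
  have hcP : (c • (1 : Matrix (Fin r) (Fin r) ℝ) - P).PosSemidef := by
    refine posSemidef_of_quad (by rw [transpose_sub, transpose_smul, transpose_one, hPsymm]) ?_
    intro v
    have := hPquad v
    simp only [sub_mulVec, smul_mulVec, one_mulVec, dotProduct_sub, dotProduct_smul,
      smul_eq_mul]
    linarith
  have htrace_key : (P * P).trace ≤ c * P.trace := by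
    set R := CFC.sqrt P with hRdef
    have hRR : R * R = P := CFC.sqrt_mul_sqrt_self _ hP.nonneg
    have hRsymm : Rᵀ = R := psd_transpose_eq (Matrix.nonneg_iff_posSemidef.mp (CFC.sqrt_nonneg _))
    have hpsd : (Rᵀ * (c • (1 : Matrix (Fin r) (Fin r) ℝ) - P) * R).PosSemidef := by
      have := hcP.conjTranspose_mul_mul_same (B := R)
      rwa [conjTranspose_eq_transpose_of_trivial] at this
    have h0 : 0 ≤ (Rᵀ * (c • (1 : Matrix (Fin r) (Fin r) ℝ) - P) * R).trace :=
      psd_trace_nonneg hpsd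
    have h1 : (Rᵀ * (c • (1 : Matrix (Fin r) (Fin r) ℝ) - P) * R).trace
        = (P * (c • (1 : Matrix (Fin r) (Fin r) ℝ) - P)).trace := by
      rw [trace_mul_comm, hRsymm, ← Matrix.mul_assoc, hRR]
    rw [h1] at h0
    have h2 : (P * (c • (1 : Matrix (Fin r) (Fin r) ℝ) - P)).trace
        = c * P.trace - (P * P).trace := by
      rw [Matrix.mul_sub, trace_sub, Matrix.mul_smul, Matrix.mul_one, trace_smul, smul_eq_mul]
    linarith [h0, h2 ▸ h0]
  have hQA : (A * P⁻¹)ᵀ * A = P := by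
    rw [transpose_mul, transpose_nonsing_inv, hPsymm, Matrix.mul_assoc, ← hPP,
      ← Matrix.mul_assoc, Matrix.nonsing_inv_mul P hPdet, Matrix.one_mul]
  refine ⟨A * P⁻¹, ?_, ?_⟩
  · rw [show (A * P⁻¹)ᵀ * (A * P⁻¹) = ((A * P⁻¹)ᵀ * A) * P⁻¹ from by rw [Matrix.mul_assoc],
      hQA, Matrix.mul_nonsing_inv P hPdet]
  · rw [hQA, ← hPP]
    exact htrace_key

/-- There is an orthogonal `Q` with `tr(QᵀM) ≥ tr(MᵀM)` whenever `‖M‖₂ ≤ 1`. -/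
lemma exists_orthogonal_trace_ge {r : ℕ} (M : Matrix (Fin r) (Fin r) ℝ)
    (hM : ∀ v, (M *ᵥ v) ⬝ᵥ (M *ᵥ v) ≤ v ⬝ᵥ v) :
    ∃ Q : Matrix (Fin r) (Fin r) ℝ, Qᵀ * Q = 1 ∧ (Mᵀ * M).trace ≤ (Qᵀ * M).trace := by
  have hchoice : ∀ k : ℕ, ∃ s : ℝ, (s ∈ Set.Ioo (0:ℝ) (1/(k+1))) ∧
      (M + s • (1 : Matrix (Fin r) (Fin r) ℝ)).det ≠ 0 := by
    intro k
    have hfin := Polynomial.finite_setOf_isRoot (p := (-M).charpoly)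
      (Matrix.charpoly_monic _).ne_zero
    have hinf : (Set.Ioo (0:ℝ) (1/(k+1))).Infinite := Set.Ioo_infinite (by positivity)
    obtain ⟨s, hs⟩ := (hinf.diff hfin).nonempty
    refine ⟨s, hs.1, ?_⟩
    intro h0
    exact hs.2 (by rw [Set.mem_setOf_eq, Polynomial.IsRoot, eval_charpoly_det, h0])
  choose t ht hdet using hchoice
  have ht0 : ∀ k, 0 < t k := fun k => (ht k).1
  have ht1 : ∀ k, t k < 1/(k+1) := fun k => (ht k).2
  have htlim : Tendsto t atTop (nhds 0) :=
    tendsto_of_tendsto_of_tendsto_of_le_of_le tendsto_const_nhds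
      tendsto_one_div_add_atTop_nhds_zero_nat (fun k => (ht0 k).le) (fun k => (ht1 k).le)
  have hMv : ∀ v : Fin r → ℝ, (M *ᵥ v) ⬝ᵥ v ≤ v ⬝ᵥ v := by
    intro v
    have h1 := dot_CS (M *ᵥ v) v
    have h2 := hM v
    have h3 := dot_self_nonneg' v
    have h4 := dot_self_nonneg' (M *ᵥ v)
    nlinarith
  have hQex : ∀ k : ℕ, ∃ Q : Matrix (Fin r) (Fin r) ℝ, Qᵀ * Q = 1 ∧
      ((M + t k • 1)ᵀ * (M + t k • 1)).trace ≤ (1 + t k) * (Qᵀ * (M + t k • 1)).trace := by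
    intro k
    apply polar_invertible _ (hdet k) (1 + t k) (by linarith [ht0 k])
    intro v
    have hmv : (M + t k • (1 : Matrix (Fin r) (Fin r) ℝ)) *ᵥ v = M *ᵥ v + t k • v := by
      simp [add_mulVec, smul_mulVec, one_mulVec]
    rw [hmv]
    have hexp : (M *ᵥ v + t k • v) ⬝ᵥ (M *ᵥ v + t k • v)
        = (M *ᵥ v) ⬝ᵥ (M *ᵥ v) + 2 * t k * ((M *ᵥ v) ⬝ᵥ v) + t k ^2 * (v ⬝ᵥ v) := by
      simp [dotProduct_add, add_dotProduct, dotProduct_smul, smul_dotProduct, smul_eq_mul,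
        dotProduct_comm v (M *ᵥ v)]
      ring
    rw [hexp]
    have h2 := hM v
    have h3 := hMv v
    have h4 := ht0 k
    nlinarith [dot_self_nonneg' v]
  choose Qs hQs1 hQs2 using hQex
  set G : ℝ → ℝ := fun s =>
    ((Mᵀ * M).trace + 2*s*M.trace + s^2*(r:ℝ))/(1+s) - s*(r:ℝ) with hGdef
  have hbound : ∀ k, G (t k) ≤ ((Qs k)ᵀ * M).trace := by
    intro k
    have hk := hQs2 k
    have hτ := ht0 k
    have hLHS : ((M + t k • 1)ᵀ * (M + t k • 1)).trace
        = (Mᵀ * M).trace + 2*(t k)*M.trace + (t k)^2*(r:ℝ) := by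
      simp only [transpose_add, transpose_smul, transpose_one, Matrix.add_mul, Matrix.mul_add,
        Matrix.smul_mul, Matrix.mul_smul, Matrix.mul_one, Matrix.one_mul, smul_smul,
        trace_add, trace_smul, trace_transpose, trace_one, smul_eq_mul, Fintype.card_fin]
      ring
    have hRHS : ((Qs k)ᵀ * (M + t k • 1)).trace
        = ((Qs k)ᵀ * M).trace + t k * (Qs k).trace := by
      rw [Matrix.mul_add, Matrix.mul_smul, Matrix.mul_one, trace_add, trace_smul,
        trace_transpose]
      simp [smul_eq_mul]
    rw [hLHS, hRHS] at hk
    have habs := orth_trace_abs_le r (Qs k) (hQs1 k)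
    have htr : t k * (Qs k).trace ≤ t k * r :=
      mul_le_mul_of_nonneg_left ((le_abs_self _).trans habs) hτ.le
    have hdiv : ((Mᵀ * M).trace + 2*(t k)*M.trace + (t k)^2*(r:ℝ))/(1 + t k)
        ≤ ((Qs k)ᵀ * M).trace + t k * (Qs k).trace := by
      rw [div_le_iff₀ (by linarith)]
      nlinarith
    simp only [hGdef]
    linarith
  letI : FirstCountableTopology (Matrix (Fin r) (Fin r) ℝ) :=
    inferInstanceAs (FirstCountableTopology (Fin r → Fin r → ℝ))
  obtain ⟨Q, hQmem, φ, hφ, hconv⟩ := (orth_compact r).tendsto_subseq (x := Qs) hQs1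
  refine ⟨Q, hQmem, ?_⟩
  have hτφ : Tendsto (t ∘ φ) atTop (nhds 0) := htlim.comp hφ.tendsto_atTop
  have hG0 : G 0 = (Mᵀ * M).trace := by simp [hGdef]
  have hGcont : ContinuousAt G 0 := by
    apply ContinuousAt.sub
    · apply ContinuousAt.div (by fun_prop) (by fun_prop)
      norm_num
    · fun_prop
  have hgconv : Tendsto (fun k => G (t (φ k))) atTop (nhds ((Mᵀ * M).trace)) := by
    rw [← hG0]
    exact hGcont.tendsto.comp hτφ
  have hfcont : Continuous fun Q : Matrix (Fin r) (Fin r) ℝ => (Qᵀ * M).trace :=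
    ((continuous_id.matrix_transpose).matrix_mul continuous_const).matrix_trace
  have hfconv : Tendsto (fun k => ((Qs (φ k))ᵀ * M).trace) atTop (nhds ((Qᵀ * M).trace)) :=
    (hfcont.tendsto Q).comp hconv
  exact le_of_tendsto_of_tendsto' hgconv hfconv fun k => hbound (φ k)

end Aux

/-- For all `W, V ∈ 𝕍_{n,r}` there exists `Q ∈ O(r)` with
`‖W − V Q‖_F ≤ √(2·min(r,n−r)) · ‖W Wᵀ (I − V Vᵀ)‖₂`. -/
theorem stmt_4 (n r : ℕ) (W V : Matrix (Fin n) (Fin r) ℝ)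
    (hW : Wᵀ * W = 1) (hV : Vᵀ * V = 1) :
    ∃ Q : Matrix (Fin r) (Fin r) ℝ, Qᵀ * Q = 1 ∧ Q * Qᵀ = 1 ∧
      frobNorm (W - V * Q) ≤
        Real.sqrt (2 * ((min r (n - r) : ℕ) : ℝ)) * specNorm (W * Wᵀ * (1 - V * Vᵀ)) := by
  classical
  set P : Matrix (Fin n) (Fin n) ℝ := 1 - V * Vᵀ with hPdef
  set A : Matrix (Fin n) (Fin n) ℝ := W * Wᵀ * P with hAdef
  set s : ℝ := specNorm A with hsdef
  set M : Matrix (Fin r) (Fin r) ℝ := Vᵀ * W with hMdef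
  have hs0 : 0 ≤ s := specNorm_nonneg A
  have hPsymm : Pᵀ = P := by
    rw [hPdef, transpose_sub, transpose_one, transpose_mul, transpose_transpose]
  have hVV : V * Vᵀ * (V * Vᵀ) = V * Vᵀ := by
    rw [Matrix.mul_assoc, ← Matrix.mul_assoc Vᵀ V Vᵀ, hV, Matrix.one_mul]
  have hPP : P * P = P := by
    rw [hPdef]
    simp only [Matrix.sub_mul, Matrix.mul_sub, Matrix.one_mul, Matrix.mul_one, hVV]
    abel
  have hPpsd : P.PosSemidef := proj_psd V hV
  -- the key matrix identity : (P W)ᵀ (P W) = 1 - Mᵀ M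
  have hSkey : (P * W)ᵀ * (P * W) = 1 - Mᵀ * M := by
    rw [transpose_mul, hPsymm, Matrix.mul_assoc, ← Matrix.mul_assoc P P W, hPP, hPdef, hMdef]
    rw [Matrix.sub_mul, Matrix.one_mul, Matrix.mul_sub, hW, transpose_mul, transpose_transpose]
    rw [show Wᵀ * (V * Vᵀ * W) = (Wᵀ * V) * (Vᵀ * W) from by
      rw [Matrix.mul_assoc, Matrix.mul_assoc]]
  have hSpsd : ((1 : Matrix (Fin r) (Fin r) ℝ) - Mᵀ * M).PosSemidef := by
    rw [← hSkey]
    have := Matrix.posSemidef_conjTranspose_mul_self (P * W)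
    rwa [conjTranspose_eq_transpose_of_trivial] at this
  -- contraction property of M
  have hMquad : ∀ v, (M *ᵥ v) ⬝ᵥ (M *ᵥ v) ≤ v ⬝ᵥ v := by
    intro v
    have h1 : (M *ᵥ v) ⬝ᵥ (M *ᵥ v) = v ⬝ᵥ ((Mᵀ * M) *ᵥ v) := dot_mulVec_self M v
    have h2 := psd_dot hSpsd v
    simp only [sub_mulVec, one_mulVec, dotProduct_sub] at h2
    linarith
  obtain ⟨Q, hQ1, hQtr⟩ := exists_orthogonal_trace_ge M hMquad
  have hQ2 : Q * Qᵀ = 1 := mul_eq_one_comm.mp hQ1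
  refine ⟨Q, hQ1, hQ2, ?_⟩
  -- Frobenius identity
  have hfrob : (∑ i, ∑ j, ((W - V * Q) i j)^2) = ((W - V * Q)ᵀ * (W - V * Q)).trace := by
    rw [Matrix.trace]
    simp only [Matrix.diag_apply, Matrix.mul_apply, transpose_apply, pow_two]
    rw [Finset.sum_comm]
  have hexpand : ((W - V * Q)ᵀ * (W - V * Q)).trace = 2*(r:ℝ) - 2*(Qᵀ * M).trace := by
    have e1 : (W - V * Q)ᵀ * (W - V * Q)
        = Wᵀ * W - Wᵀ * (V * Q) - (Qᵀ * Vᵀ) * W + Qᵀ * Vᵀ * V * Q := by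
      rw [transpose_sub, transpose_mul, Matrix.sub_mul, Matrix.mul_sub, Matrix.mul_sub]
      rw [show Qᵀ * Vᵀ * (V * Q) = Qᵀ * Vᵀ * V * Q from by rw [Matrix.mul_assoc (Qᵀ * Vᵀ)]]
      abel
    have e2 : Qᵀ * Vᵀ * V * Q = (1 : Matrix (Fin r) (Fin r) ℝ) := by
      rw [Matrix.mul_assoc Qᵀ Vᵀ V, hV, Matrix.mul_one, hQ1]
    have e3 : (Wᵀ * (V * Q)).trace = (Qᵀ * M).trace := by
      rw [← trace_transpose, transpose_mul, transpose_mul, transpose_transpose, hMdef,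
        Matrix.mul_assoc]
    have e4 : ((Qᵀ * Vᵀ) * W).trace = (Qᵀ * M).trace := by
      rw [hMdef, Matrix.mul_assoc]
    rw [e1, e2, trace_add, trace_sub, trace_sub, hW, trace_one, e3, e4, Fintype.card_fin]
    ring
  -- trace of 1 - MᵀM is bounded by r s² and (n-r) s²
  have hAtW : Aᵀ * W = P * W := by
    rw [hAdef, transpose_mul, hPsymm, transpose_mul, transpose_transpose]
    simp only [Matrix.mul_assoc]
    rw [hW, Matrix.mul_one]
  have hr_bound : ((1 : Matrix (Fin r) (Fin r) ℝ) - Mᵀ * M).trace ≤ (r:ℝ) * s^2 := by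
    have hpsd : (s^2 • (1 : Matrix (Fin r) (Fin r) ℝ)
        - ((1 : Matrix (Fin r) (Fin r) ℝ) - Mᵀ * M)).PosSemidef := by
      apply posSemidef_of_quad
      · rw [transpose_sub, transpose_smul, transpose_one, psd_transpose_eq hSpsd]
      · intro v
        have h1 : v ⬝ᵥ (((1 : Matrix (Fin r) (Fin r) ℝ) - Mᵀ * M) *ᵥ v)
            = ((P * W) *ᵥ v) ⬝ᵥ ((P * W) *ᵥ v) := by
          rw [dot_mulVec_self (P * W) v, hSkey]
        have h2 : (P * W) *ᵥ v = Aᵀ *ᵥ (W *ᵥ v) := by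
          rw [← hAtW, ← mulVec_mulVec]
        have h3 : (Aᵀ *ᵥ (W *ᵥ v)) ⬝ᵥ (Aᵀ *ᵥ (W *ᵥ v))
            ≤ specNorm Aᵀ ^2 * ((W *ᵥ v) ⬝ᵥ (W *ᵥ v)) := mulVec_dot_le Aᵀ (W *ᵥ v)
        have h4 : (W *ᵥ v) ⬝ᵥ (W *ᵥ v) = v ⬝ᵥ v := by
          rw [dot_mulVec_self W v, hW, one_mulVec]
        rw [specNorm_transpose] at h3
        simp only [sub_mulVec, smul_mulVec, one_mulVec, dotProduct_sub, dotProduct_smul,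
          smul_eq_mul]
        rw [h4] at h3
        have h5 := h2 ▸ h1
        simp only [sub_mulVec, one_mulVec, dotProduct_sub] at h5
        rw [hsdef]
        linarith [h5, h3]
    have h0 := psd_trace_nonneg hpsd
    rw [trace_sub, trace_smul, trace_one, Fintype.card_fin, smul_eq_mul] at h0
    linarith
  have hnr_bound : ((1 : Matrix (Fin r) (Fin r) ℝ) - Mᵀ * M).trace ≤ ((n:ℝ) - r) * s^2 := by
    have hWW : (W * Wᵀ) * (W * Wᵀ) = W * Wᵀ := by
      rw [Matrix.mul_assoc, ← Matrix.mul_assoc Wᵀ W Wᵀ, hW, Matrix.one_mul]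
    have hAsymmT : Aᵀ = P * (W * Wᵀ) := by
      rw [hAdef, transpose_mul, hPsymm, transpose_mul, transpose_transpose]
    have hAA : Aᵀ * A = (P * W) * (P * W)ᵀ := by
      rw [hAsymmT, hAdef, transpose_mul, hPsymm]
      simp only [Matrix.mul_assoc]
      rw [← Matrix.mul_assoc Wᵀ W (Wᵀ * P), hW, Matrix.one_mul]
    have htrT : (Aᵀ * A).trace = ((1 : Matrix (Fin r) (Fin r) ℝ) - Mᵀ * M).trace := by
      rw [hAA, trace_mul_comm, hSkey]
    have hAP : A * P = A := by
      rw [hAdef, Matrix.mul_assoc, hPP]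
    have hpsd2 : (s^2 • P - Aᵀ * A).PosSemidef := by
      apply posSemidef_of_quad
      · rw [transpose_sub, transpose_smul, hPsymm, transpose_mul, transpose_transpose]
      · intro v
        have h1 : v ⬝ᵥ ((Aᵀ * A) *ᵥ v) = (A *ᵥ v) ⬝ᵥ (A *ᵥ v) := (dot_mulVec_self A v).symm
        have h2 : A *ᵥ v = A *ᵥ (P *ᵥ v) := by rw [mulVec_mulVec, hAP]
        have h3 : (A *ᵥ (P *ᵥ v)) ⬝ᵥ (A *ᵥ (P *ᵥ v))
            ≤ specNorm A ^2 * ((P *ᵥ v) ⬝ᵥ (P *ᵥ v)) := mulVec_dot_le A (P *ᵥ v)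
        have h4 : (P *ᵥ v) ⬝ᵥ (P *ᵥ v) = v ⬝ᵥ (P *ᵥ v) := by
          rw [dot_mulVec_self P v, hPsymm, hPP]
        simp only [sub_mulVec, smul_mulVec, dotProduct_sub, dotProduct_smul, smul_eq_mul]
        rw [h4] at h3
        rw [hsdef]
        rw [h1, h2]
        linarith
    have h0 := psd_trace_nonneg hpsd2
    have htrP : P.trace = (n:ℝ) - r := by
      rw [hPdef, trace_sub, trace_one, Fintype.card_fin, trace_mul_comm, hV, trace_one,
        Fintype.card_fin]
    rw [trace_sub, trace_smul, htrP, smul_eq_mul, htrT] at h0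
    linarith
  -- r ≤ n
  have hrn : (r:ℝ) ≤ (n:ℝ) := by
    have h0 := psd_trace_nonneg (proj_psd W hW)
    rw [trace_sub, trace_one, Fintype.card_fin, trace_mul_comm, hW, trace_one,
      Fintype.card_fin] at h0
    linarith
  have hrn' : r ≤ n := by exact_mod_cast hrn
  have hmin : ((min r (n - r) : ℕ) : ℝ) = min (r:ℝ) ((n:ℝ) - r) := by
    push_cast [Nat.cast_sub hrn']
    ring_nf
  -- final combination
  have htrS_le : ((1 : Matrix (Fin r) (Fin r) ℝ) - Mᵀ * M).trace
      ≤ ((min r (n - r) : ℕ) : ℝ) * s^2 := by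
    rw [hmin, min_mul_of_nonneg _ _ (by positivity : (0:ℝ) ≤ s^2)]
    exact le_min hr_bound hnr_bound
  have htrS : ((1 : Matrix (Fin r) (Fin r) ℝ) - Mᵀ * M).trace = (r:ℝ) - (Mᵀ * M).trace := by
    rw [trace_sub, trace_one, Fintype.card_fin]
  have hsum_le : (∑ i, ∑ j, ((W - V * Q) i j)^2)
      ≤ 2 * ((min r (n - r) : ℕ) : ℝ) * s^2 := by
    rw [hfrob, hexpand]
    have : (r:ℝ) - (Qᵀ * M).trace ≤ ((min r (n - r) : ℕ) : ℝ) * s^2 := by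
      have := htrS ▸ htrS_le
      linarith [hQtr]
    linarith
  rw [frobNorm]
  calc Real.sqrt (∑ i, ∑ j, ((W - V * Q) i j)^2)
      ≤ Real.sqrt (2 * ((min r (n - r) : ℕ) : ℝ) * s^2) := Real.sqrt_le_sqrt hsum_le
    _ = Real.sqrt (2 * ((min r (n - r) : ℕ) : ℝ)) * Real.sqrt (s^2) := by
        rw [Real.sqrt_mul (by positivity)]
    _ = Real.sqrt (2 * ((min r (n - r) : ℕ) : ℝ)) * s := by
        rw [Real.sqrt_sq hs0]
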